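/- arXiv:1110.1302 — 8 statements merged into one kernel-verified Lean document; each statement's English description precedes it below -/
import Mathlib

section
/- For every integer k ≥ 1 and every real parameter t, the polynomial f_t^k(s) = t^{2k-1}(s-1)^{2k} + (t-1)^{2k-1} t^{2k-1} - (t-1)^{2k-1} s^{2k} satisfies f_t^k(s) ≥ 0 for all real s, with equality if and only if s = t. -/
/-! The derivative of `s ↦ f_t^k(s)` is `2k ((t(s-1))^(2k-1) - ((t-1)s)^(2k-1))`. Since
`t(s-1) - (t-1)s = s - t` and odd powers are strictly increasing, it has the sign of `s - t`,
so `f_t^k` strictly decreases up to `t`, strictly increases after it, and `f_t^k(t) = 0`. -/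

lemma lt_of_hasDerivAt_of_sign {f f' : ℝ → ℝ} {a s : ℝ} (hf : ∀ x, HasDerivAt f (f' x) x)
    (hneg : ∀ x < a, f' x < 0) (hpos : ∀ x, a < x → 0 < f' x) (hs : s ≠ a) : f a < f s := by
  have hcont : Continuous f := continuous_iff_continuousAt.2 fun x => (hf x).continuousAt
  rcases hs.lt_or_gt with hsa | has
  · refine strictAntiOn_of_deriv_neg (convex_Iic a) hcont.continuousOn (fun x hx => ?_)
      hsa.le Set.self_mem_Iic hsa
    rw [interior_Iic] at hx
    exact (hf x).deriv ▸ hneg x hx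
  · refine strictMonoOn_of_deriv_pos (convex_Ici a) hcont.continuousOn (fun x hx => ?_)
      Set.self_mem_Ici has.le has
    rw [interior_Ici] at hx
    exact (hf x).deriv ▸ hpos x hx

/-- The paper's `f_t^k(s)`, written with `m = 2k - 1`. -/
def fPoly (m : ℕ) (t s : ℝ) : ℝ :=
  t ^ m * (s - 1) ^ (m + 1) + (t - 1) ^ m * t ^ m - (t - 1) ^ m * s ^ (m + 1)

lemma fPoly_self (m : ℕ) (t : ℝ) : fPoly m t t = 0 := by
  rw [fPoly, pow_succ, pow_succ]
  ring

lemma hasDerivAt_fPoly (m : ℕ) (t s : ℝ) :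
    HasDerivAt (fPoly m t) ((m + 1) * ((t * (s - 1)) ^ m - ((t - 1) * s) ^ m)) s := by
  have hshift : HasDerivAt (fun x : ℝ => (x - 1) ^ (m + 1)) ((m + 1) * (s - 1) ^ m) s := by
    simpa using ((hasDerivAt_id s).sub_const 1).fun_pow (m + 1)
  have hpow : HasDerivAt (fun x : ℝ => x ^ (m + 1)) ((m + 1) * s ^ m) s := by
    simpa using hasDerivAt_pow (m + 1) s
  refine (((hshift.const_mul (t ^ m)).add_const ((t - 1) ^ m * t ^ m)).sub
    (hpow.const_mul ((t - 1) ^ m))).congr_deriv ?_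
  rw [mul_pow, mul_pow]
  ring

lemma fPoly_pos {m : ℕ} (hm : Odd m) {t s : ℝ} (hs : s ≠ t) : 0 < fPoly m t s := by
  have hm1 : (0 : ℝ) < m + 1 := by positivity
  rw [← fPoly_self m t]
  refine lt_of_hasDerivAt_of_sign (hasDerivAt_fPoly m t) (fun x hx => ?_) (fun x hx => ?_) hs
  · exact mul_neg_of_pos_of_neg hm1 (sub_neg.2 (hm.strictMono_pow (by linarith)))
  · exact mul_pos hm1 (sub_pos.2 (hm.strictMono_pow (by linarith)))

/-- For every integer `k ≥ 1` and real `t`, the polynomial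
`f_t^k(s) = t^(2k-1)(s-1)^(2k) + (t-1)^(2k-1) t^(2k-1) - (t-1)^(2k-1) s^(2k)`
is nonnegative for all real `s`, with equality iff `s = t`. -/
theorem stmt_0 (k : ℕ) (hk : 1 ≤ k) (t s : ℝ) :
    0 ≤ t ^ (2 * k - 1) * (s - 1) ^ (2 * k) + (t - 1) ^ (2 * k - 1) * t ^ (2 * k - 1)
        - (t - 1) ^ (2 * k - 1) * s ^ (2 * k) ∧
    (t ^ (2 * k - 1) * (s - 1) ^ (2 * k) + (t - 1) ^ (2 * k - 1) * t ^ (2 * k - 1)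
        - (t - 1) ^ (2 * k - 1) * s ^ (2 * k) = 0 ↔ s = t) := by
  have hodd : Odd (2 * k - 1) := ⟨k - 1, by omega⟩
  rw [show 2 * k = (2 * k - 1) + 1 by omega]
  change 0 ≤ fPoly _ t s ∧ (fPoly _ t s = 0 ↔ s = t)
  rcases eq_or_ne s t with rfl | hs
  · simp [fPoly_self]
  · exact ⟨(fPoly_pos hodd hs).le, iff_of_false (fPoly_pos hodd hs).ne' hs⟩
end

section
/- For every integer k ≥ 1, the function F_k(z,w) = x^{2k-1} a^{2k-1} (y-b)^{2k} + x^{2k-1} (x-a)^{2k-1} b^{2k} - a^{2k-1} (x-a)^{2k-1} y^{2k} is nonnegative for all points z = (x,y) and w = (a,b) in the plane. -/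
/-!
Put `m = 2k - 1`, `p = (a - x, -a, x)` and `v = (y - b, b, -y)`. Both triples sum to zero and,
`m` being odd, `-F_k` is the form `∑ (pⱼ pₗ)^m vᵢ^(m+1)` over `{i, j, l} = {1, 2, 3}`. This form
is symmetric in the pairs `(pᵢ, vᵢ)` and even in `p`, and two of the `pᵢ` have the same sign, so
we may take `p₁, p₂ ≥ 0`. Eliminating `p₃` and `v₃`, nonpositivity of the form becomes Radon's
inequality `(v₁ + v₂)^(m+1) / (p₁ + p₂)^m ≤ v₁^(m+1) / p₁^m + v₂^(m+1) / p₂^m`, that is,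
convexity of `t ↦ t^(m+1)`.
-/

-- Radon's inequality for two terms, with the denominators cleared.
theorem mul_pow_mul_add_pow_succ_le {m : ℕ} (hm : Even (m + 1)) {u v : ℝ} (hu : 0 ≤ u)
    (hv : 0 ≤ v) (s t : ℝ) :
    u ^ m * v ^ m * (s + t) ^ (m + 1)
      ≤ (u + v) ^ m * (v ^ m * s ^ (m + 1) + u ^ m * t ^ (m + 1)) := by
  have hm₀ : m ≠ 0 := by rintro rfl; exact Nat.not_even_one hm
  rcases hu.eq_or_lt with rfl | hu
  · rw [zero_pow hm₀, zero_add]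
    have := hm.pow_nonneg s
    simp only [zero_mul, add_zero]; positivity
  rcases hv.eq_or_lt with rfl | hv
  · rw [zero_pow hm₀, add_zero]
    have := hm.pow_nonneg t
    simp only [mul_zero, zero_mul, zero_add]; positivity
  have hw : u / (u + v) + v / (u + v) = 1 := by field_simp
  -- convexity at `s (u + v) / u` and `t (u + v) / v` with weights `u / (u + v)`, `v / (u + v)`
  have hconv := hm.convexOn_pow.2 (Set.mem_univ (s * (u + v) / u))
    (Set.mem_univ (t * (u + v) / v)) (by positivity) (by positivity) hw
  simp only [smul_eq_mul] at hconv
  have e₁ : u / (u + v) * (s * (u + v) / u) + v / (u + v) * (t * (u + v) / v) = s + t := by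
    field_simp
  have e₂ : u / (u + v) * (s * (u + v) / u) ^ (m + 1) + v / (u + v) * (t * (u + v) / v) ^ (m + 1)
      = (u + v) ^ m * (s ^ (m + 1) / u ^ m + t ^ (m + 1) / v ^ m) := by
    rw [div_pow, div_pow, mul_pow, mul_pow]
    field_simp
    ring
  rw [e₁, e₂] at hconv
  calc u ^ m * v ^ m * (s + t) ^ (m + 1)
      ≤ u ^ m * v ^ m * ((u + v) ^ m * (s ^ (m + 1) / u ^ m + t ^ (m + 1) / v ^ m)) :=
        mul_le_mul_of_nonneg_left hconv (by positivity)
    _ = _ := by field_simp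

section PairwiseProductForm

variable {m : ℕ} {p₁ p₂ p₃ v₁ v₂ v₃ : ℝ}

theorem pairwise_product_form_nonpos_of_nonneg (hm : Odd m) (hp : p₁ + p₂ + p₃ = 0)
    (hv : v₁ + v₂ + v₃ = 0) (hp₁ : 0 ≤ p₁) (hp₂ : 0 ≤ p₂) :
    (p₂ * p₃) ^ m * v₁ ^ (m + 1) + (p₁ * p₃) ^ m * v₂ ^ (m + 1) + (p₁ * p₂) ^ m * v₃ ^ (m + 1)
      ≤ 0 := by
  obtain rfl : p₃ = -(p₁ + p₂) := by linarith
  obtain rfl : v₃ = -(v₁ + v₂) := by linarith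
  have hradon := mul_pow_mul_add_pow_succ_le hm.add_one hp₁ hp₂ v₁ v₂
  simp only [mul_neg, hm.neg_pow, hm.add_one.neg_pow, mul_pow] at hradon ⊢
  linarith

theorem pairwise_product_form_nonpos_of_mul_nonneg (hm : Odd m) (hp : p₁ + p₂ + p₃ = 0)
    (hv : v₁ + v₂ + v₃ = 0) (h : 0 ≤ p₁ * p₂) :
    (p₂ * p₃) ^ m * v₁ ^ (m + 1) + (p₁ * p₃) ^ m * v₂ ^ (m + 1) + (p₁ * p₂) ^ m * v₃ ^ (m + 1)
      ≤ 0 := by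
  rcases mul_nonneg_iff.1 h with ⟨hp₁, hp₂⟩ | ⟨hp₁, hp₂⟩
  · exact pairwise_product_form_nonpos_of_nonneg hm hp hv hp₁ hp₂
  · have hp' : -p₁ + -p₂ + -p₃ = 0 := by linarith
    linear_combination
      pairwise_product_form_nonpos_of_nonneg hm hp' hv (neg_nonneg.2 hp₁) (neg_nonneg.2 hp₂)

theorem pairwise_product_form_nonpos (hm : Odd m) (hp : p₁ + p₂ + p₃ = 0)
    (hv : v₁ + v₂ + v₃ = 0) :
    (p₂ * p₃) ^ m * v₁ ^ (m + 1) + (p₁ * p₃) ^ m * v₂ ^ (m + 1) + (p₁ * p₂) ^ m * v₃ ^ (m + 1)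
      ≤ 0 := by
  have hsign : 0 ≤ p₁ * p₂ ∨ 0 ≤ p₁ * p₃ ∨ 0 ≤ p₂ * p₃ := by
    -- the product of the three pairwise products is a square
    by_contra! h
    nlinarith [mul_self_nonneg (p₁ * p₂ * p₃), mul_pos_of_neg_of_neg h.1 h.2.1]
  rcases hsign with h | h | h
  · exact pairwise_product_form_nonpos_of_mul_nonneg hm hp hv h
  · linear_combination pairwise_product_form_nonpos_of_mul_nonneg hm
      (p₂ := p₃) (p₃ := p₂) (v₁ := v₁) (v₂ := v₃) (v₃ := v₂) (by linarith) (by linarith) h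
  · linear_combination pairwise_product_form_nonpos_of_mul_nonneg hm
      (p₁ := p₂) (p₂ := p₃) (p₃ := p₁) (v₁ := v₂) (v₂ := v₃) (v₃ := v₁) (by linarith)
      (by linarith) h

end PairwiseProductForm

/-- For every integer `k ≥ 1`, the function
`F_k((x,y),(a,b)) = x^(2k-1) a^(2k-1) (y-b)^(2k) + x^(2k-1) (x-a)^(2k-1) b^(2k)
  - a^(2k-1) (x-a)^(2k-1) y^(2k)` is nonnegative on ℝ² × ℝ². -/
theorem stmt_1 (k : ℕ) (hk : 1 ≤ k) (x y a b : ℝ) :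
    0 ≤ x ^ (2 * k - 1) * a ^ (2 * k - 1) * (y - b) ^ (2 * k)
        + x ^ (2 * k - 1) * (x - a) ^ (2 * k - 1) * b ^ (2 * k)
        - a ^ (2 * k - 1) * (x - a) ^ (2 * k - 1) * y ^ (2 * k) := by
  set m := 2 * k - 1
  have hm : Odd m := ⟨k - 1, by omega⟩
  rw [show 2 * k = m + 1 by omega]
  have h := pairwise_product_form_nonpos hm (p₁ := a - x) (p₂ := -a) (p₃ := x)
    (v₁ := y - b) (v₂ := b) (v₃ := -y) (by ring) (by ring)
  rw [← neg_sub x a] at h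
  simp only [neg_mul, mul_neg, hm.neg_pow, hm.add_one.neg_pow, mul_pow] at h
  linarith
end

section
/- For every positive integer n and any three distinct points z₁, z₂, z₃ in the plane, the permuted sum p_n(z₁,z₂,z₃) = K_n(z₁−z₂)K_n(z₁−z₃) + K_n(z₂−z₁)K_n(z₂−z₃) + K_n(z₃−z₁)K_n(z₃−z₂) is nonnegative, where K_n(z) = x^{2n−1}/|z|^{2n} for z = (x,y) ≠ 0. -/
/-- The kernel `K_n(x,y) = x^(2n-1) / (x² + y²)^n`. -/
noncomputable def Kker (n : ℕ) (p : ℝ × ℝ) : ℝ :=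
  p.1 ^ (2 * n - 1) / (p.1 ^ 2 + p.2 ^ 2) ^ n

/-- The permuted sum `p_n(z₁,z₂,z₃)`. -/
noncomputable def pperm (n : ℕ) (z₁ z₂ z₃ : ℝ × ℝ) : ℝ :=
  Kker n (z₁ - z₂) * Kker n (z₁ - z₃) + Kker n (z₂ - z₁) * Kker n (z₂ - z₃)
    + Kker n (z₃ - z₁) * Kker n (z₃ - z₂)


theorem keyJ (n : ℕ) (a b s t : ℝ) (ha : 0 < a) (hb : 0 < b) :
    (((a*s+b*t)/(a+b))^2+1)^n ≤ (a/(a+b))*(s^2+1)^n + (b/(a+b))*(t^2+1)^n := by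
  have hc : 0 < a + b := by linarith
  have hl : (0:ℝ) ≤ a/(a+b) := by positivity
  have hm : (0:ℝ) ≤ b/(a+b) := by positivity
  have hs : a/(a+b) + b/(a+b) = 1 := by field_simp
  have h1 : ((a/(a+b))*s+(b/(a+b))*t)^2+1 ≤ (a/(a+b))*(s^2+1)+(b/(a+b))*(t^2+1) := by
    nlinarith [mul_nonneg (mul_nonneg hl hm) (sq_nonneg (s-t))]
  have h2 := pow_le_pow_left₀ (by positivity) h1 n
  have h3 := (convexOn_pow n).2 (Set.mem_Ici.mpr (by positivity : (0:ℝ) ≤ s^2+1))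
    (Set.mem_Ici.mpr (by positivity : (0:ℝ) ≤ t^2+1)) hl hm hs
  simp only [smul_eq_mul] at h3
  have harg : (a*s+b*t)/(a+b) = (a/(a+b))*s+(b/(a+b))*t := by field_simp
  rw [harg]
  exact le_trans h2 h3

theorem keyB (n : ℕ) (a b u v : ℝ) (ha : 0 < a) (hb : 0 < b) :
    (a+b) * (((a+b)^2+(u+v)^2)^n) * (a*b)^(2*n)
      ≤ a * ((a^2+u^2)^n) * (b*(a+b))^(2*n) + b * ((b^2+v^2)^n) * (a*(a+b))^(2*n) := by
  have hc : 0 < a + b := by linarith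
  have hdiv : ∀ x w : ℝ, x ≠ 0 → ((w/x)^2+1)^n = (x^2+w^2)^n / x^(2*n) := by
    intro x w hx
    rw [pow_mul, ← div_pow]
    congr 1
    field_simp
    ring
  have hJ := keyJ n a b (u/a) (v/b) ha hb
  rw [show a*(u/a)+b*(v/b) = u+v by field_simp] at hJ
  rw [hdiv (a+b) (u+v) (ne_of_gt hc), hdiv a u (ne_of_gt ha), hdiv b v (ne_of_gt hb)] at hJ
  have hD : (0:ℝ) < (a+b)^(2*n+1) * a^(2*n) * b^(2*n) := by positivity
  have h2 := mul_le_mul_of_nonneg_left hJ (le_of_lt hD)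
  have e1 : ((a+b)^(2*n+1) * a^(2*n) * b^(2*n)) * (((a+b)^2+(u+v)^2)^n / (a+b)^(2*n))
      = (a+b) * (((a+b)^2+(u+v)^2)^n) * (a*b)^(2*n) := by
    field_simp
    ring
  have e2 : ((a+b)^(2*n+1) * a^(2*n) * b^(2*n)) *
      ((a/(a+b)) * ((a^2+u^2)^n / a^(2*n)) + (b/(a+b)) * ((b^2+v^2)^n / b^(2*n)))
      = a * ((a^2+u^2)^n) * (b*(a+b))^(2*n) + b * ((b^2+v^2)^n) * (a*(a+b))^(2*n) := by
    rw [mul_pow b (a+b), mul_pow a (a+b)]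
    field_simp
    ring
  rw [e1, e2] at h2
  exact h2

/-- expanded-power version of keyB -/
theorem keyB' (n : ℕ) (a b u v : ℝ) (ha : 0 < a) (hb : 0 < b) :
    (a+b) * (((a+b)^2+(u+v)^2)^n) * a^(2*n) * b^(2*n)
      ≤ a * ((a^2+u^2)^n) * b^(2*n) * (a+b)^(2*n)
        + b * ((b^2+v^2)^n) * a^(2*n) * (a+b)^(2*n) := by
  have h := keyB n a b u v ha hb
  rw [mul_pow b (a+b), mul_pow a (a+b), mul_pow a b] at h
  linarith [h]

theorem coreP (k : ℕ) (x1 y1 x2 y2 : ℝ) :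
    0 ≤ x1^(2*k+1)*(x1+x2)^(2*k+1)*(x2^2+y2^2)^(k+1)
      + x2^(2*k+1)*(x1+x2)^(2*k+1)*(x1^2+y1^2)^(k+1)
      - x1^(2*k+1)*x2^(2*k+1)*((x1+x2)^2+(y1+y2)^2)^(k+1) := by
  have hodd : Odd (2*k+1) := odd_two_mul_add_one k
  rcases eq_or_ne x1 0 with h1 | h1
  · subst h1
    simp only [zero_pow (by omega : 2*k+1 ≠ 0), zero_mul, mul_zero, zero_add, sub_zero,
      add_zero, zero_sub, neg_zero, ne_eq]
    have e : x2^(2*k+1)*x2^(2*k+1)*((0:ℝ)^2+y1^2)^(k+1)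
        = (x2^(2*k+1))^2*(y1^2)^(k+1) := by ring
    rw [e]
    positivity
  rcases eq_or_ne x2 0 with h2 | h2
  · subst h2
    simp only [zero_pow (by omega : 2*k+1 ≠ 0), zero_mul, mul_zero, zero_add, sub_zero,
      add_zero]
    have e : x1^(2*k+1)*x1^(2*k+1)*((0:ℝ)^2+y2^2)^(k+1)
        = (x1^(2*k+1))^2*(y2^2)^(k+1) := by ring
    rw [e]
    positivity
  rcases eq_or_ne (x1+x2) 0 with h3 | h3
  · rw [h3]
    have hx2 : x2 = -x1 := by linarith
    subst hx2
    simp only [zero_pow (by omega : 2*k+1 ≠ 0), zero_mul, mul_zero, zero_add, zero_sub]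
    rw [Odd.neg_pow hodd x1]
    have e : -(x1^(2*k+1) * -x1^(2*k+1) * ((0:ℝ)^2+(y1+y2)^2)^(k+1))
        = (x1^(2*k+1))^2 *((y1+y2)^2)^(k+1) := by ring
    rw [e]
    positivity
  -- main case : all three nonzero
  set n := k + 1 with hn
  set q1 := x1^2+y1^2 with hq1
  set q2 := x2^2+y2^2 with hq2
  set q3 := (x1+x2)^2+(y1+y2)^2 with hq3
  set E := x1^(2*k+1)*(x1+x2)^(2*k+1)*q2^n + x2^(2*k+1)*(x1+x2)^(2*k+1)*q1^n
      - x1^(2*k+1)*x2^(2*k+1)*q3^n with hE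
  set R := x1*q1^n*x2^(2*n)*(x1+x2)^(2*n) + x2*q2^n*x1^(2*n)*(x1+x2)^(2*n)
      - (x1+x2)*q3^n*x1^(2*n)*x2^(2*n) with hR
  have hid : E * (x1*x2*(x1+x2)) = R := by
    rw [hE, hR, hn]
    ring
  rcases lt_or_gt_of_ne h1 with h1n | h1p
  · rcases lt_or_gt_of_ne h2 with h2n | h2p
    · -- both negative
      have h := keyB' n (-x1) (-x2) (-y1) (-y2) (by linarith) (by linarith)
      simp only [← neg_add, Even.neg_pow (even_two_mul n), neg_sq] at h
      have hRn : R ≤ 0 := by rw [hR]; linarith [h]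
      have hprod : x1*x2*(x1+x2) < 0 := by
        have : 0 < x1*x2 := mul_pos_of_neg_of_neg h1n h2n
        nlinarith
      rw [eq_comm, ← div_eq_iff (ne_of_lt hprod)] at hid
      rw [← hid]
      exact div_nonneg_of_nonpos hRn (le_of_lt hprod)
    · -- x1 < 0 < x2
      rcases lt_or_gt_of_ne h3 with h3n | h3p
      · -- x1+x2 < 0 : x2 = (x1+x2) + (-x1) : -x1 = (-(x1+x2)) + x2
        have h := keyB' n x2 (-(x1+x2)) y2 (-(y1+y2)) h2p (by linarith)
        have e1 : x2 + -(x1+x2) = -x1 := by ring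
        have e2 : y2 + -(y1+y2) = -y1 := by ring
        rw [e1, e2] at h
        simp only [Even.neg_pow (even_two_mul n), neg_sq] at h
        have hRp : 0 ≤ R := by rw [hR]; linarith [h]
        have hprod : 0 < x1*x2*(x1+x2) := by nlinarith [mul_pos_of_neg_of_neg h1n h3n]
        rw [eq_comm, ← div_eq_iff (ne_of_gt hprod)] at hid
        rw [← hid]
        exact div_nonneg hRp (le_of_lt hprod)
      · -- x1+x2 > 0 : x2 = (x1+x2) + (-x1)
        have h := keyB' n (x1+x2) (-x1) (y1+y2) (-y1) h3p (by linarith)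
        have e1 : (x1+x2) + -x1 = x2 := by ring
        have e2 : (y1+y2) + -y1 = y2 := by ring
        rw [e1, e2] at h
        simp only [Even.neg_pow (even_two_mul n), neg_sq] at h
        have hRn : R ≤ 0 := by rw [hR]; linarith [h]
        have hprod : x1*x2*(x1+x2) < 0 := by nlinarith [mul_pos h2p h3p]
        rw [eq_comm, ← div_eq_iff (ne_of_lt hprod)] at hid
        rw [← hid]
        exact div_nonneg_of_nonpos hRn (le_of_lt hprod)
  · rcases lt_or_gt_of_ne h2 with h2n | h2p
    · -- x2 < 0 < x1
      rcases lt_or_gt_of_ne h3 with h3n | h3p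
      · -- x1+x2 < 0 : -x2 = (-(x1+x2)) + x1
        have h := keyB' n x1 (-(x1+x2)) y1 (-(y1+y2)) h1p (by linarith)
        have e1 : x1 + -(x1+x2) = -x2 := by ring
        have e2 : y1 + -(y1+y2) = -y2 := by ring
        rw [e1, e2] at h
        simp only [Even.neg_pow (even_two_mul n), neg_sq] at h
        have hRp : 0 ≤ R := by rw [hR]; linarith [h]
        have hprod : 0 < x1*x2*(x1+x2) := by nlinarith [mul_pos_of_neg_of_neg h2n h3n]
        rw [eq_comm, ← div_eq_iff (ne_of_gt hprod)] at hid
        rw [← hid]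
        exact div_nonneg hRp (le_of_lt hprod)
      · -- x1+x2 > 0 : x1 = (x1+x2) + (-x2)
        have h := keyB' n (x1+x2) (-x2) (y1+y2) (-y2) h3p (by linarith)
        have e1 : (x1+x2) + -x2 = x1 := by ring
        have e2 : (y1+y2) + -y2 = y1 := by ring
        rw [e1, e2] at h
        simp only [Even.neg_pow (even_two_mul n), neg_sq] at h
        have hRn : R ≤ 0 := by rw [hR]; linarith [h]
        have hprod : x1*x2*(x1+x2) < 0 := by nlinarith [mul_pos h1p h3p]
        rw [eq_comm, ← div_eq_iff (ne_of_lt hprod)] at hid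
        rw [← hid]
        exact div_nonneg_of_nonpos hRn (le_of_lt hprod)
    · -- both positive
      have h := keyB' n x1 x2 y1 y2 h1p h2p
      have hRp : 0 ≤ R := by rw [hR]; linarith [h]
      have hprod : 0 < x1*x2*(x1+x2) := by positivity
      rw [eq_comm, ← div_eq_iff (ne_of_gt hprod)] at hid
      rw [← hid]
      exact div_nonneg hRp (le_of_lt hprod)

theorem qpos (w : ℝ × ℝ) (hw : w ≠ 0) : 0 < w.1^2 + w.2^2 := by
  rcases ne_or_eq w.1 0 with h | h
  · have h2 : 0 < w.1^2 := by positivity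
    nlinarith [sq_nonneg w.2]
  · have h2 : w.2 ≠ 0 := by
      intro h2
      exact hw (Prod.ext h h2)
    have h3 : 0 < w.2^2 := by positivity
    nlinarith [sq_nonneg w.1]

theorem Kneg (n : ℕ) (hn : 1 ≤ n) (w : ℝ × ℝ) : Kker n (-w) = - Kker n w := by
  obtain ⟨k, rfl⟩ : ∃ k, n = k + 1 := ⟨n - 1, by omega⟩
  have hm : 2 * (k+1) - 1 = 2*k+1 := by omega
  simp only [Kker, Prod.fst_neg, Prod.snd_neg, hm, neg_sq,
    Odd.neg_pow (odd_two_mul_add_one k), neg_div]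


/-- for `n ≥ 1` and pairwise distinct points, `p_n(z₁,z₂,z₃) ≥ 0`. -/
theorem stmt_3 (n : ℕ) (hn : 1 ≤ n) (z₁ z₂ z₃ : ℝ × ℝ)
    (h12 : z₁ ≠ z₂) (h13 : z₁ ≠ z₃) (h23 : z₂ ≠ z₃) :
    0 ≤ pperm n z₁ z₂ z₃ := by
  have e21 : z₂ - z₁ = -(z₁ - z₂) := by abel
  have e31 : z₃ - z₁ = -(z₁ - z₃) := by abel
  have e32 : z₃ - z₂ = -(z₂ - z₃) := by abel
  have e13 : z₁ - z₃ = (z₁ - z₂) + (z₂ - z₃) := by abel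
  have hq1 : 0 < (z₁ - z₂).1^2 + (z₁ - z₂).2^2 := qpos _ (sub_ne_zero.mpr h12)
  have hq2 : 0 < (z₂ - z₃).1^2 + (z₂ - z₃).2^2 := qpos _ (sub_ne_zero.mpr h23)
  have hq3 : 0 < (z₁ - z₃).1^2 + (z₁ - z₃).2^2 := qpos _ (sub_ne_zero.mpr h13)
  rw [e13] at hq3
  obtain ⟨k, rfl⟩ : ∃ k, n = k + 1 := ⟨n - 1, by omega⟩
  set x1 := (z₁ - z₂).1 with hx1
  set y1 := (z₁ - z₂).2 with hy1
  set x2 := (z₂ - z₃).1 with hx2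
  set y2 := (z₂ - z₃).2 with hy2
  have hm : 2 * (k+1) - 1 = 2*k+1 := by omega
  rw [pperm, e21, e31, e32, e13, Kneg (k+1) (by omega), Kneg (k+1) (by omega),
    Kneg (k+1) (by omega)]
  simp only [Kker, Prod.fst_add, Prod.snd_add, hm, ← hx1, ← hy1, ← hx2, ← hy2]
  simp only [Prod.fst_add, Prod.snd_add] at hq3
  rw [show x1^(2*k+1) / ((x1^2+y1^2)^(k+1)) * ((x1+x2)^(2*k+1) / (((x1+x2)^2+(y1+y2)^2)^(k+1)))
      + -(x1^(2*k+1) / ((x1^2+y1^2)^(k+1))) * (x2^(2*k+1) / ((x2^2+y2^2)^(k+1)))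
      + -((x1+x2)^(2*k+1) / (((x1+x2)^2+(y1+y2)^2)^(k+1))) * -(x2^(2*k+1) / ((x2^2+y2^2)^(k+1)))
      = (x1^(2*k+1)*(x1+x2)^(2*k+1)*(x2^2+y2^2)^(k+1)
          + x2^(2*k+1)*(x1+x2)^(2*k+1)*(x1^2+y1^2)^(k+1)
          - x1^(2*k+1)*x2^(2*k+1)*((x1+x2)^2+(y1+y2)^2)^(k+1))
        / ((x1^2+y1^2)^(k+1) * (x2^2+y2^2)^(k+1) * (((x1+x2)^2+(y1+y2)^2)^(k+1))) from by
    have d1 : (x1^2+y1^2)^(k+1) ≠ 0 := by positivity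
    have d2 : (x2^2+y2^2)^(k+1) ≠ 0 := by positivity
    have d3 : ((x1+x2)^2+(y1+y2)^2)^(k+1) ≠ 0 := by positivity
    field_simp
    ring]
  exact div_nonneg (coreP k x1 y1 x2 y2) (by positivity)
end

section
/- For every positive integer n and any three pairwise distinct points z₁, z₂, z₃ in the plane, p_n(z₁,z₂,z₃) = 0 if and only if z₁, z₂, z₃ are collinear, where p_n is the permuted sum of products of the kernel K_n(z) = x^{2n−1}/|z|^{2n}. -/
/-- Radon's inequality for two terms. -/
theorem add_pow_succ_div_pow_le (k : ℕ) {a b x y : ℝ} (ha : 0 ≤ a) (hb : 0 ≤ b)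
    (hx : 0 < x) (hy : 0 < y) :
    (a + b) ^ (k + 1) / (x + y) ^ k ≤ a ^ (k + 1) / x ^ k + b ^ (k + 1) / y ^ k := by
  have hxy : 0 < x + y := add_pos hx hy
  have h := (convexOn_pow (k + 1)).2 (Set.mem_Ici.2 (div_nonneg ha hx.le))
    (Set.mem_Ici.2 (div_nonneg hb hy.le)) (div_nonneg hx.le hxy.le) (div_nonneg hy.le hxy.le)
    (by rw [← add_div, div_self hxy.ne'])
  have hmean : x / (x + y) * (a / x) + y / (x + y) * (b / y) = (a + b) / (x + y) := by
    field_simp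
  simp only [smul_eq_mul, hmean, div_pow] at h
  calc (a + b) ^ (k + 1) / (x + y) ^ k
      = (x + y) * ((a + b) ^ (k + 1) / (x + y) ^ (k + 1)) := by field_simp; ring
    _ ≤ (x + y) * (x / (x + y) * (a ^ (k + 1) / x ^ (k + 1))
          + y / (x + y) * (b ^ (k + 1) / y ^ (k + 1))) := by gcongr
    _ = a ^ (k + 1) / x ^ k + b ^ (k + 1) / y ^ k := by field_simp; ring

theorem add_pow_succ_div_pow_lt (k : ℕ) {a b c x y : ℝ} (ha : 0 ≤ a) (hb : 0 ≤ b)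
    (hc : 0 ≤ c) (habc : c < a + b) (hx : 0 < x) (hy : 0 < y) :
    c ^ (k + 1) / (x + y) ^ k < a ^ (k + 1) / x ^ k + b ^ (k + 1) / y ^ k := by
  refine lt_of_lt_of_le ?_ (add_pow_succ_div_pow_le k ha hb hx hy)
  gcongr

theorem mul_lt_of_inv_lt_inv_add_inv {u v w : ℝ} (hu : 0 < u) (hv : 0 < v) (hw : 0 < w)
    (h : w⁻¹ < u⁻¹ + v⁻¹) : u * v < w * (u + v) := by
  rw [inv_add_inv hu.ne' hv.ne', inv_lt_comm₀ hw (by positivity), inv_div,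
    div_lt_iff₀ (by positivity)] at h
  linarith

theorem pow_div_mul_pow_div_lt {m : ℕ} (hm : m ≠ 0) {x y P Q R : ℝ} (hx : 0 ≤ x) (hy : 0 ≤ y)
    (hxy : 0 < x + y) (hP : 0 < P) (hQ : 0 < Q) (hR : 0 < R) (hRPQ : R < P + Q) :
    x ^ m / P ^ (m + 1) * (y ^ m / Q ^ (m + 1))
      < (x + y) ^ m / R ^ (m + 1) * (x ^ m / P ^ (m + 1) + y ^ m / Q ^ (m + 1)) := by
  rcases hx.eq_or_lt with rfl | hx
  · rw [zero_add] at hxy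
    simp only [zero_pow hm, zero_div, zero_mul, zero_add]
    positivity
  rcases hy.eq_or_lt with rfl | hy
  · rw [add_zero] at hxy
    simp only [zero_pow hm, zero_div, mul_zero, add_zero]
    positivity
  refine mul_lt_of_inv_lt_inv_add_inv (by positivity) (by positivity) (by positivity) ?_
  simp only [inv_div]
  exact add_pow_succ_div_pow_lt m hP.le hQ.le hR.le hRPQ hx hy

def cross (u v : ℝ × ℝ) : ℝ := u.1 * v.2 - u.2 * v.1

noncomputable def euclNorm (v : ℝ × ℝ) : ℝ := √(v.1 ^ 2 + v.2 ^ 2)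

theorem euclNorm_sq (v : ℝ × ℝ) : euclNorm v ^ 2 = v.1 ^ 2 + v.2 ^ 2 :=
  Real.sq_sqrt (by positivity)

theorem euclNorm_nonneg (v : ℝ × ℝ) : 0 ≤ euclNorm v := Real.sqrt_nonneg _

theorem euclNorm_pos {v : ℝ × ℝ} (hv : v ≠ 0) : 0 < euclNorm v := by
  refine Real.sqrt_pos.2 ((add_nonneg (sq_nonneg _) (sq_nonneg _)).lt_of_ne fun h => hv ?_)
  have h1 : v.1 ^ 2 = 0 := by linarith [sq_nonneg v.1, sq_nonneg v.2]
  have h2 : v.2 ^ 2 = 0 := by linarith [sq_nonneg v.1, sq_nonneg v.2]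
  exact Prod.ext (pow_eq_zero_iff two_ne_zero |>.1 h1) (pow_eq_zero_iff two_ne_zero |>.1 h2)

theorem euclNorm_add_lt {u v : ℝ × ℝ} (h : cross u v ≠ 0) :
    euclNorm (u + v) < euclNorm u + euclNorm v := by
  have hdot : u.1 * v.1 + u.2 * v.2 < euclNorm u * euclNorm v := by
    rw [euclNorm, euclNorm, ← Real.sqrt_mul (by positivity)]
    refine Real.lt_sqrt_of_sq_lt ?_
    have lagrange : (u.1 * v.1 + u.2 * v.2) ^ 2 + cross u v ^ 2
        = (u.1 ^ 2 + u.2 ^ 2) * (v.1 ^ 2 + v.2 ^ 2) := by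
      unfold cross; ring
    have hcross : 0 < cross u v ^ 2 := by positivity
    linarith
  refine lt_of_pow_lt_pow_left₀ 2 (add_nonneg (euclNorm_nonneg u) (euclNorm_nonneg v)) ?_
  rw [add_sq, euclNorm_sq, euclNorm_sq, euclNorm_sq, Prod.fst_add, Prod.snd_add]
  linarith

theorem cross_neg_neg (u v : ℝ × ℝ) : cross (-u) (-v) = cross u v := by
  simp only [cross, Prod.fst_neg, Prod.snd_neg]; ring

theorem cross_rotate {a b c : ℝ × ℝ} (h : a + b + c = 0) : cross b c = cross a b := by
  obtain rfl : c = -(a + b) := eq_neg_of_add_eq_zero_right h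
  simp only [cross, Prod.fst_neg, Prod.snd_neg, Prod.fst_add, Prod.snd_add]; ring

theorem exists_eq_smul_of_cross_eq_zero {u v : ℝ × ℝ} (hu : u ≠ 0) (h : cross u v = 0) :
    ∃ t : ℝ, v = t • u := by
  unfold cross at h
  by_cases h1 : u.1 = 0
  · have h2 : u.2 ≠ 0 := fun h2 => hu (Prod.ext h1 h2)
    refine ⟨v.2 / u.2, Prod.ext ?_ ?_⟩ <;> simp only [Prod.smul_fst, Prod.smul_snd, smul_eq_mul]
    · field_simp
      linear_combination -h
    · field_simp
  · refine ⟨v.1 / u.1, Prod.ext ?_ ?_⟩ <;> simp only [Prod.smul_fst, Prod.smul_snd, smul_eq_mul]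
    · field_simp
    · field_simp
      linear_combination h

theorem collinear_of_cross_eq_zero {p q r : ℝ × ℝ} (h : cross (p - q) (q - r) = 0) :
    Collinear ℝ ({p, q, r} : Set (ℝ × ℝ)) := by
  by_cases hpq : p = q
  · subst hpq
    simpa using collinear_pair ℝ p r
  obtain ⟨t, ht⟩ := exists_eq_smul_of_cross_eq_zero (sub_ne_zero.2 hpq) h
  rw [collinear_iff_of_mem (p₀ := q) (by simp)]
  refine ⟨p - q, ?_⟩
  simp only [Set.mem_insert_iff, Set.mem_singleton_iff, forall_eq_or_imp, forall_eq]
  refine ⟨⟨1, by simp⟩, ⟨0, by simp⟩, ⟨-t, ?_⟩⟩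
  rw [vadd_eq_add, neg_smul, ← ht]
  abel

section Kker

variable {n : ℕ}

theorem odd_two_mul_sub_one (hn : 1 ≤ n) : Odd (2 * n - 1) := ⟨n - 1, by omega⟩

theorem Kker_neg (hn : 1 ≤ n) (v : ℝ × ℝ) : Kker n (-v) = -Kker n v := by
  simp only [Kker, Prod.fst_neg, Prod.snd_neg, (odd_two_mul_sub_one hn).neg_pow, neg_sq,
    neg_div]

theorem Kker_smul (hn : 1 ≤ n) (v : ℝ × ℝ) {t : ℝ} (ht : t ≠ 0) :
    Kker n (t • v) = Kker n v / t := by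
  have ht2 : (t ^ 2) ^ n = t ^ (2 * n - 1) * t := by
    rw [← pow_mul, ← pow_succ]; congr 1; omega
  simp only [Kker, Prod.smul_fst, Prod.smul_snd, smul_eq_mul, mul_pow]
  rw [← mul_add, mul_pow, ht2, div_div, mul_right_comm,
    mul_assoc, mul_div_mul_left _ _ (pow_ne_zero _ ht)]

theorem Kker_eq_div_euclNorm_pow (hn : 1 ≤ n) (v : ℝ × ℝ) :
    Kker n v = v.1 ^ (2 * n - 1) / euclNorm v ^ (2 * n - 1 + 1) := by
  rw [Kker, show 2 * n - 1 + 1 = 2 * n by omega, pow_mul, euclNorm_sq]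

theorem Kker_triple_neg_of_fst_nonneg (hn : 1 ≤ n) {a b c : ℝ × ℝ} (habc : a + b + c = 0)
    (hab : cross a b ≠ 0) (ha : 0 ≤ a.1) (hb : 0 ≤ b.1) :
    Kker n a * Kker n b + Kker n b * Kker n c + Kker n c * Kker n a < 0 := by
  obtain rfl : c = -(a + b) := eq_neg_of_add_eq_zero_right habc
  have hab1 : 0 < a.1 + b.1 := by
    refine (add_nonneg ha hb).lt_of_ne fun h => hab ?_
    have ha0 : a.1 = 0 := by linarith
    have hb0 : b.1 = 0 := by linarith
    simp [cross, ha0, hb0]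
  have key := pow_div_mul_pow_div_lt (odd_two_mul_sub_one hn).pos.ne' ha hb hab1
    (euclNorm_pos fun h => hab (by simp [h, cross]))
    (euclNorm_pos fun h => hab (by simp [h, cross]))
    (euclNorm_pos fun h => hab1.ne' (by rw [← Prod.fst_add, h, Prod.fst_zero]))
    (euclNorm_add_lt hab)
  rw [Kker_neg hn, Kker_eq_div_euclNorm_pow hn a, Kker_eq_div_euclNorm_pow hn b,
    Kker_eq_div_euclNorm_pow hn (a + b), Prod.fst_add]
  linear_combination key

theorem Kker_triple_neg_of_mul_fst_nonneg (hn : 1 ≤ n) {a b c : ℝ × ℝ} (habc : a + b + c = 0)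
    (hab : cross a b ≠ 0) (hsign : 0 ≤ a.1 * b.1) :
    Kker n a * Kker n b + Kker n b * Kker n c + Kker n c * Kker n a < 0 := by
  rcases mul_nonneg_iff.1 hsign with ⟨ha, hb⟩ | ⟨ha, hb⟩
  · exact Kker_triple_neg_of_fst_nonneg hn habc hab ha hb
  · have h := Kker_triple_neg_of_fst_nonneg hn (a := -a) (b := -b) (c := -c)
      (by rw [← neg_add, ← neg_add, habc, neg_zero]) (by rwa [cross_neg_neg])
      (by simpa using ha) (by simpa using hb)
    simpa only [Kker_neg hn, neg_mul_neg] using h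

theorem Kker_triple_neg (hn : 1 ≤ n) {a b c : ℝ × ℝ} (habc : a + b + c = 0)
    (hab : cross a b ≠ 0) :
    Kker n a * Kker n b + Kker n b * Kker n c + Kker n c * Kker n a < 0 := by
  have hbca : b + c + a = 0 := by rw [← habc]; abel
  have hcab : c + a + b = 0 := by rw [← habc]; abel
  have hbc : cross b c ≠ 0 := by rwa [cross_rotate habc]
  have hca : cross c a ≠ 0 := by rwa [cross_rotate hbca]
  have hsign : 0 ≤ a.1 * b.1 ∨ 0 ≤ b.1 * c.1 ∨ 0 ≤ c.1 * a.1 := by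
    by_contra! h
    nlinarith [mul_pos_of_neg_of_neg h.1 h.2.1, sq_nonneg (a.1 * b.1 * c.1)]
  rcases hsign with h | h | h
  · exact Kker_triple_neg_of_mul_fst_nonneg hn habc hab h
  · linarith [Kker_triple_neg_of_mul_fst_nonneg hn hbca hbc h]
  · linarith [Kker_triple_neg_of_mul_fst_nonneg hn hcab hca h]

theorem Kker_triple_smul_eq_zero (hn : 1 ≤ n) (v : ℝ × ℝ) {t₁ t₂ t₃ : ℝ} (h₁ : t₁ ≠ 0)
    (h₂ : t₂ ≠ 0) (h₃ : t₃ ≠ 0) (ht : t₁ + t₂ + t₃ = 0) :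
    Kker n (t₁ • v) * Kker n (t₂ • v) + Kker n (t₂ • v) * Kker n (t₃ • v)
      + Kker n (t₃ • v) * Kker n (t₁ • v) = 0 := by
  rw [Kker_smul hn v h₁, Kker_smul hn v h₂, Kker_smul hn v h₃]
  field_simp
  linear_combination Kker n v ^ 2 * ht

theorem pperm_eq_neg (hn : 1 ≤ n) (z₁ z₂ z₃ : ℝ × ℝ) :
    pperm n z₁ z₂ z₃ = -(Kker n (z₁ - z₂) * Kker n (z₂ - z₃)
      + Kker n (z₂ - z₃) * Kker n (z₃ - z₁) + Kker n (z₃ - z₁) * Kker n (z₁ - z₂)) := by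
  rw [pperm, ← neg_sub z₃ z₁, ← neg_sub z₁ z₂, ← neg_sub z₂ z₃]
  simp only [Kker_neg hn]
  ring

end Kker

theorem pperm_eq_zero_of_collinear {n : ℕ} (hn : 1 ≤ n) {z₁ z₂ z₃ : ℝ × ℝ} (h12 : z₁ ≠ z₂)
    (h13 : z₁ ≠ z₃) (h23 : z₂ ≠ z₃) (h : Collinear ℝ ({z₁, z₂, z₃} : Set (ℝ × ℝ))) :
    pperm n z₁ z₂ z₃ = 0 := by
  obtain ⟨p₀, v, hv⟩ := (collinear_iff_exists_forall_eq_smul_vadd _).1 h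
  obtain ⟨r₁, rfl⟩ := hv z₁ (by simp)
  obtain ⟨r₂, rfl⟩ := hv z₂ (by simp)
  obtain ⟨r₃, rfl⟩ := hv z₃ (by simp)
  simp only [vadd_eq_add] at h12 h13 h23
  have hsub (r s : ℝ) : r • v + p₀ - (s • v + p₀) = (r - s) • v := by
    rw [add_sub_add_right_eq_sub, sub_smul]
  have hne {r s : ℝ} (h : r • v + p₀ ≠ s • v + p₀) : r - s ≠ 0 :=
    sub_ne_zero.2 fun hrs => h (by rw [hrs])
  rw [pperm_eq_neg hn, vadd_eq_add, vadd_eq_add, vadd_eq_add, hsub, hsub, hsub,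
    Kker_triple_smul_eq_zero hn v (hne h12) (hne h23) (hne h13.symm) (by ring), neg_zero]

theorem pperm_pos_of_not_collinear {n : ℕ} (hn : 1 ≤ n) {z₁ z₂ z₃ : ℝ × ℝ}
    (h : ¬Collinear ℝ ({z₁, z₂, z₃} : Set (ℝ × ℝ))) : 0 < pperm n z₁ z₂ z₃ := by
  rw [pperm_eq_neg hn, neg_pos]
  exact Kker_triple_neg hn (by abel) fun hc => h (collinear_of_cross_eq_zero hc)

/-- for `n ≥ 1` and pairwise distinct points, `p_n(z₁,z₂,z₃) = 0`
iff the three points are collinear. -/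
theorem stmt_4 (n : ℕ) (hn : 1 ≤ n) (z₁ z₂ z₃ : ℝ × ℝ)
    (h12 : z₁ ≠ z₂) (h13 : z₁ ≠ z₃) (h23 : z₂ ≠ z₃) :
    pperm n z₁ z₂ z₃ = 0 ↔ Collinear ℝ ({z₁, z₂, z₃} : Set (ℝ × ℝ)) :=
  ⟨fun h => by_contra fun hc => (pperm_pos_of_not_collinear hn hc).ne' h,
    pperm_eq_zero_of_collinear hn h12 h13 h23⟩
end

section
/- For any two distinct nonzero points z = (x,y) and w = (a,b) in the plane and any positive integer n, the quantity A(z,w) = x^{2n−1} a^{2n−1} |z−w|^{2n} + x^{2n−1} (x−a)^{2n−1} |w|^{2n} − a^{2n−1} (x−a)^{2n−1} |z|^{2n} equals the finite sum ∑_{k=1}^{n} C(n,k) x^{2(n−k)} a^{2(n−k)} (x−a)^{2(n−k)} F_k(z,w), where F_k(z,w) = x^{2k−1} a^{2k−1} (y−b)^{2k} + x^{2k−1} (x−a)^{2k−1} b^{2k} − a^{2k−1} (x−a)^{2k−1} y^{2k} and C(n,k) denotes the binomial coefficient. -/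
/-- decomposition of `A(z,w)` as a binomial sum of the `F_k`'s,
where `|u|^(2m)` is written as `(u₁² + u₂²)^m`. -/
theorem stmt_5 (n : ℕ) (hn : 1 ≤ n) (x y a b : ℝ)
    (hz : (x, y) ≠ ((0, 0) : ℝ × ℝ)) (hw : (a, b) ≠ ((0, 0) : ℝ × ℝ))
    (hzw : (x, y) ≠ ((a, b) : ℝ × ℝ)) :
    x ^ (2 * n - 1) * a ^ (2 * n - 1) * ((x - a) ^ 2 + (y - b) ^ 2) ^ n
      + x ^ (2 * n - 1) * (x - a) ^ (2 * n - 1) * (a ^ 2 + b ^ 2) ^ n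
      - a ^ (2 * n - 1) * (x - a) ^ (2 * n - 1) * (x ^ 2 + y ^ 2) ^ n
    = ∑ k ∈ Finset.Icc 1 n, (n.choose k : ℝ) * x ^ (2 * (n - k)) * a ^ (2 * (n - k))
        * (x - a) ^ (2 * (n - k)) *
        (x ^ (2 * k - 1) * a ^ (2 * k - 1) * (y - b) ^ (2 * k)
          + x ^ (2 * k - 1) * (x - a) ^ (2 * k - 1) * b ^ (2 * k)
          - a ^ (2 * k - 1) * (x - a) ^ (2 * k - 1) * y ^ (2 * k)) := by
  have key : ∀ u v : ℝ, (u ^ 2 + v ^ 2) ^ n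
      = ∑ k ∈ Finset.range (n + 1),
          (n.choose k : ℝ) * u ^ (2 * (n - k)) * v ^ (2 * k) := by
    intro u v
    rw [add_comm, add_pow]
    refine Finset.sum_congr rfl fun k hk => ?_
    rw [mul_comm 2 k, mul_comm 2 (n - k), pow_mul, pow_mul]
    ring
  rw [key (x - a) (y - b), key a b, key x y, Finset.mul_sum, Finset.mul_sum,
    Finset.mul_sum, ← Finset.sum_add_distrib, ← Finset.sum_sub_distrib]
  have hsplit : Finset.range (n + 1) = insert 0 (Finset.Icc 1 n) := by
    ext k; simp; omega
  rw [hsplit, Finset.sum_insert (by simp)]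
  have hzero : x ^ (2 * n - 1) * a ^ (2 * n - 1)
        * ((n.choose 0 : ℝ) * (x - a) ^ (2 * (n - 0)) * (y - b) ^ (2 * 0))
      + x ^ (2 * n - 1) * (x - a) ^ (2 * n - 1)
        * ((n.choose 0 : ℝ) * a ^ (2 * (n - 0)) * b ^ (2 * 0))
      - a ^ (2 * n - 1) * (x - a) ^ (2 * n - 1)
        * ((n.choose 0 : ℝ) * x ^ (2 * (n - 0)) * y ^ (2 * 0)) = 0 := by
    have h2 : 2 * (n - 0) = (2 * n - 1) + 1 := by omega
    rw [h2, pow_succ, pow_succ, pow_succ]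
    simp only [Nat.choose_zero_right, Nat.cast_one, mul_zero, pow_zero]
    ring
  rw [hzero, zero_add]
  refine Finset.sum_congr rfl fun k hk => ?_
  simp only [Finset.mem_Icc] at hk
  have h1 : 2 * n - 1 = 2 * (n - k) + (2 * k - 1) := by omega
  rw [h1, pow_add, pow_add, pow_add]
  ring
end

section
/- Let μ be a finite Borel measure on ℝ² such that μ(B(x,r)) ≤ C₀ r for every ball. Then for every ball B with μ(B) ≥ δ·r(B) there exist constants C₁, C₁′ ≥ 1 depending only on C₀ and δ and three balls B₁, B₂, B₃ of radius r(B)/C₁ with centers in B whose centers are pairwise at distance at least 12 r(B)/C₁, and satisfying μ(B_i) ≥ r(B_i)/C₁′ for i = 1,2,3. -/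
open MeasureTheory Metric ENNReal

/-!
Once `C₁ ≥ 48 C₀ / δ`, linear growth bounds the mass of every ball of radius `12 r / C₁` by
`δ r / 4`. By compactness and scaling, `B(x, r)` is covered by `N = N(C₁)` balls of radius
`r / (2 C₁)`, so every part of `B(x, r)` of mass `a` contains a point `y` with
`μ(B(y, r / C₁)) ≥ a / N`. Choose `y₁, y₂, y₃` greedily: removing the `12 r / C₁`-balls around
the points already chosen still leaves mass at least `δ r / 2` in `B(x, r)`.
-/

theorem exists_card_le_cover_closedBall {E : Type*} [NormedAddCommGroup E] [NormedSpace ℝ E]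
    [ProperSpace E] {c : ℝ} (hc : 0 < c) :
    ∃ N : ℕ, ∀ (x : E) {r : ℝ}, 0 < r →
      ∃ t : Finset E, t.card ≤ N ∧ closedBall x r ⊆ ⋃ z ∈ t, closedBall z (c * r) := by
  classical
  obtain ⟨t₀, -, hcov₀⟩ := (isCompact_closedBall (0 : E) 1).elim_nhds_subcover
    (fun z => ball z c) (fun z _ => ball_mem_nhds z hc)
  refine ⟨t₀.card, fun x r hr => ⟨t₀.image (fun z => x + r • z), Finset.card_image_le, ?_⟩⟩
  intro y hy
  have hw : r⁻¹ • (y - x) ∈ closedBall (0 : E) 1 := by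
    rw [mem_closedBall_zero_iff, norm_smul, norm_inv, Real.norm_of_nonneg hr.le,
      inv_mul_le_iff₀ hr, mul_one, ← dist_eq_norm]
    exact hy
  obtain ⟨z, hz, hwz⟩ := Set.mem_iUnion₂.1 (hcov₀ hw)
  refine Set.mem_biUnion (Finset.mem_image_of_mem _ hz) ?_
  have hy_eq : y = x + r • (r⁻¹ • (y - x)) := by
    rw [smul_inv_smul₀ hr.ne', add_sub_cancel]
  rw [mem_closedBall, hy_eq, dist_add_left, dist_smul₀, Real.norm_of_nonneg hr.le, mul_comm]
  exact mul_le_mul_of_nonneg_right (mem_ball.1 hwz).le hr.le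

theorem exists_div_card_le_measure_closedBall {α : Type*} [PseudoMetricSpace α]
    [MeasurableSpace α] (μ : Measure α) {S : Set α} {t : Finset α} {ρ : ℝ} {a : ℝ≥0∞}
    (hcov : S ⊆ ⋃ z ∈ t, closedBall z ρ) (ha : a ≠ 0) (haS : a ≤ μ S) :
    ∃ y ∈ S, a / t.card ≤ μ (closedBall y (2 * ρ)) := by
  have haS_le : a ≤ ∑ z ∈ t, μ (S ∩ closedBall z ρ) := calc
    a ≤ μ (⋃ z ∈ t, S ∩ closedBall z ρ) := by
      rw [← Set.inter_iUnion₂]; exact haS.trans (measure_mono (Set.subset_inter le_rfl hcov))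
    _ ≤ ∑ z ∈ t, μ (S ∩ closedBall z ρ) := measure_biUnion_finset_le t _
  have ht : t.Nonempty := Finset.nonempty_of_sum_ne_zero (ne_bot_of_le_ne_bot ha haS_le)
  have hsum : ∑ _z ∈ t, a / t.card ≤ ∑ z ∈ t, μ (S ∩ closedBall z ρ) := calc
    ∑ _z ∈ t, a / t.card = t.card * (a / t.card) := by rw [Finset.sum_const, nsmul_eq_mul]
    _ ≤ a := ENNReal.mul_div_le
    _ ≤ _ := haS_le
  obtain ⟨z, -, hz⟩ := ENNReal.exists_le_of_sum_le ht hsum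
  have hcard : a / t.card ≠ 0 := ENNReal.div_ne_zero.2 ⟨ha, ENNReal.natCast_ne_top _⟩
  obtain ⟨y, hyS, hyz⟩ := nonempty_of_measure_ne_zero (ne_bot_of_le_ne_bot hcard hz)
  refine ⟨y, hyS, hz.trans (measure_mono (Set.inter_subset_right.trans ?_))⟩
  refine closedBall_subset_closedBall' ?_
  linarith [mem_closedBall'.1 hyz]

theorem exists_div_le_measure_closedBall_of_subset_closedBall {E : Type*}
    [NormedAddCommGroup E] [NormedSpace ℝ E] [ProperSpace E] [MeasurableSpace E]
    {C : ℝ} (hC : 0 < C) :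
    ∃ N : ℕ, ∀ (μ : Measure E) (x : E) {r : ℝ}, 0 < r → ∀ {S : Set E}, S ⊆ closedBall x r →
      ∀ {a : ℝ≥0∞}, a ≠ 0 → a ≤ μ S → ∃ y ∈ S, a / N ≤ μ (closedBall y (r / C)) := by
  obtain ⟨N, hN⟩ := exists_card_le_cover_closedBall (E := E) (half_pos (inv_pos.2 hC))
  refine ⟨N, fun μ x r hr S hS a ha haS => ?_⟩
  obtain ⟨t, htN, hcov⟩ := hN x hr
  obtain ⟨y, hyS, hy⟩ := exists_div_card_le_measure_closedBall μ (hS.trans hcov) ha haS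
  rw [show 2 * (C⁻¹ / 2 * r) = r / C by ring] at hy
  exact ⟨y, hyS, (ENNReal.div_le_div_left (Nat.cast_le.2 htN) a).trans hy⟩

theorem exists_mem_forall_lt_dist_of_le_measure_sdiff {α : Type*} [PseudoMetricSpace α]
    [MeasurableSpace α] {μ : Measure α} {s : Set α} {b c e : ℝ≥0∞} {ρ R : ℝ}
    (hfind : ∀ S ⊆ s, b ≤ μ S → ∃ y ∈ S, c ≤ μ (closedBall y ρ))
    (hsmall : ∀ y, μ (closedBall y R) ≤ e) (P : Finset α) (hP : b ≤ μ s - P.card * e) :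
    ∃ y ∈ s, (∀ p ∈ P, R < dist p y) ∧ c ≤ μ (closedBall y ρ) := by
  have hfar : b ≤ μ (s \ ⋃ p ∈ P, closedBall p R) := calc
    b ≤ μ s - P.card * e := hP
    _ ≤ μ s - μ (⋃ p ∈ P, closedBall p R) := by
      gcongr
      calc μ (⋃ p ∈ P, closedBall p R) ≤ ∑ p ∈ P, μ (closedBall p R) :=
            measure_biUnion_finset_le P _
        _ ≤ P.card * e := by
            rw [← nsmul_eq_mul]; exact Finset.sum_le_card_nsmul P _ e fun p _ => hsmall p
    _ ≤ _ := le_measure_sdiff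
  obtain ⟨y, ⟨hys, hyP⟩, hy⟩ := hfind _ Set.sdiff_subset hfar
  simp only [Set.mem_iUnion, mem_closedBall', not_exists, not_le] at hyP
  exact ⟨y, hys, hyP, hy⟩

theorem stmt_13_general (C₀ δ : ℝ) (hδ : 0 < δ) :
    ∃ C₁ C₁' : ℝ, 1 ≤ C₁ ∧ 1 ≤ C₁' ∧
      ∀ (μ : Measure (EuclideanSpace ℝ (Fin 2))), IsFiniteMeasure μ →
        (∀ x : EuclideanSpace ℝ (Fin 2), ∀ r : ℝ, 0 < r →
          μ (closedBall x r) ≤ ENNReal.ofReal (C₀ * r)) →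
        ∀ x : EuclideanSpace ℝ (Fin 2), ∀ r : ℝ, 0 < r →
          ENNReal.ofReal (δ * r) ≤ μ (closedBall x r) →
          ∃ y₁ y₂ y₃ : EuclideanSpace ℝ (Fin 2),
            y₁ ∈ closedBall x r ∧ y₂ ∈ closedBall x r ∧ y₃ ∈ closedBall x r ∧
            12 * r / C₁ ≤ dist y₁ y₂ ∧ 12 * r / C₁ ≤ dist y₁ y₃ ∧
            12 * r / C₁ ≤ dist y₂ y₃ ∧
            ENNReal.ofReal ((r / C₁) / C₁') ≤ μ (closedBall y₁ (r / C₁)) ∧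
            ENNReal.ofReal ((r / C₁) / C₁') ≤ μ (closedBall y₂ (r / C₁)) ∧
            ENNReal.ofReal ((r / C₁) / C₁') ≤ μ (closedBall y₃ (r / C₁)) := by
  set C₁ := max 1 (48 * C₀ / δ)
  have hC₁ : 0 < C₁ := one_pos.trans_le (le_max_left _ _)
  obtain ⟨N, hfind⟩ := exists_div_le_measure_closedBall_of_subset_closedBall
    (E := EuclideanSpace ℝ (Fin 2)) hC₁
  set C₁' := max 1 (2 * N / (δ * C₁))
  refine ⟨C₁, C₁', le_max_left _ _, le_max_left _ _, fun μ _ hgrowth x r hr hμB => ?_⟩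
  have hsmall (y) : μ (closedBall y (12 * r / C₁)) ≤ ENNReal.ofReal (δ * r / 4) := by
    refine (hgrowth y _ (by positivity)).trans (ENNReal.ofReal_le_ofReal ?_)
    have : 48 * C₀ ≤ C₁ * δ := (div_le_iff₀ hδ).1 (le_max_right _ _)
    rw [mul_div_assoc', div_le_div_iff₀ hC₁ four_pos]
    nlinarith
  have hmass (P : Finset (EuclideanSpace ℝ (Fin 2))) (hP : P.card ≤ 2) :
      ENNReal.ofReal (δ * r / 2) ≤ μ (closedBall x r) - P.card * ENNReal.ofReal (δ * r / 4) :=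
    calc ENNReal.ofReal (δ * r / 2)
        = ENNReal.ofReal (δ * r) - 2 * ENNReal.ofReal (δ * r / 4) := by
          rw [← ENNReal.ofReal_ofNat 2, ← ENNReal.ofReal_mul zero_le_two,
            ← ENNReal.ofReal_sub _ (by positivity)]
          ring_nf
      _ ≤ _ := by gcongr; exact_mod_cast hP
  have hlow : ENNReal.ofReal ((r / C₁) / C₁') ≤ ENNReal.ofReal (δ * r / 2) / N := by
    rw [ENNReal.le_div_iff_mul_le (Or.inr (by positivity)) (Or.inr ENNReal.ofReal_ne_top),
      ← ENNReal.ofReal_natCast, ← ENNReal.ofReal_mul (by positivity)]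
    refine ENNReal.ofReal_le_ofReal ?_
    have : 2 * N ≤ C₁' * (δ * C₁) := (div_le_iff₀ (by positivity)).1 (le_max_right _ _)
    rw [div_div, div_mul_eq_mul_div, div_le_iff₀ (by positivity)]
    nlinarith
  have hstep := exists_mem_forall_lt_dist_of_le_measure_sdiff (b := ENNReal.ofReal (δ * r / 2))
    (fun S hS hb => hfind μ x hr hS (ENNReal.ofReal_pos.2 (by positivity)).ne' hb) hsmall
  obtain ⟨y₁, hy₁, -, hμ₁⟩ := hstep ∅ (hmass ∅ (by simp))
  obtain ⟨y₂, hy₂, hd₂, hμ₂⟩ := hstep {y₁} (hmass {y₁} (by simp))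
  obtain ⟨y₃, hy₃, hd₃, hμ₃⟩ := hstep {y₁, y₂} (hmass _ Finset.card_le_two)
  exact ⟨y₁, y₂, y₃, hy₁, hy₂, hy₃, (hd₂ y₁ (by simp)).le, (hd₃ y₁ (by simp)).le,
    (hd₃ y₂ (by simp)).le, hlow.trans hμ₁, hlow.trans hμ₂, hlow.trans hμ₃⟩

/-- if `μ` is a finite Borel measure on ℝ² with `C₀`-linear growth, then for
every ball `B = B(x,r)` with `μ(B) ≥ δ r` there exist constants `C₁, C₁' ≥ 1` depending
only on `C₀, δ` and three balls of radius `r/C₁` centered in `B` whose centers are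
pairwise `12r/C₁`-separated and which each carry measure at least `(r/C₁)/C₁'`. -/
theorem stmt_13 (C₀ δ : ℝ) (hC₀ : 0 < C₀) (hδ : 0 < δ) :
    ∃ C₁ C₁' : ℝ, 1 ≤ C₁ ∧ 1 ≤ C₁' ∧
      ∀ (μ : Measure (EuclideanSpace ℝ (Fin 2))), IsFiniteMeasure μ →
        (∀ x : EuclideanSpace ℝ (Fin 2), ∀ r : ℝ, 0 < r →
          μ (closedBall x r) ≤ ENNReal.ofReal (C₀ * r)) →
        ∀ x : EuclideanSpace ℝ (Fin 2), ∀ r : ℝ, 0 < r →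
          ENNReal.ofReal (δ * r) ≤ μ (closedBall x r) →
          ∃ y₁ y₂ y₃ : EuclideanSpace ℝ (Fin 2),
            y₁ ∈ closedBall x r ∧ y₂ ∈ closedBall x r ∧ y₃ ∈ closedBall x r ∧
            12 * r / C₁ ≤ dist y₁ y₂ ∧ 12 * r / C₁ ≤ dist y₁ y₃ ∧
            12 * r / C₁ ≤ dist y₂ y₃ ∧
            ENNReal.ofReal ((r / C₁) / C₁') ≤ μ (closedBall y₁ (r / C₁)) ∧
            ENNReal.ofReal ((r / C₁) / C₁') ≤ μ (closedBall y₂ (r / C₁)) ∧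
            ENNReal.ofReal ((r / C₁) / C₁') ≤ μ (closedBall y₃ (r / C₁)) :=
  stmt_13_general C₀ δ hδ
end

section
/- Let n ≥ 1 and let z = (x,y), w = (a,b) be distinct nonzero points in the plane with b = 0 (so w lies on the horizontal axis). Then A(z,w) = ∑_{k=1}^n C(n,k) x^{2(n−k)} a^{2(n−k)} (x−a)^{2(n−k)} a^{2k−1} y^{2k} ( x^{2k−1} − (x−a)^{2k−1} ) ≥ 0, and A(z,w) = 0 if and only if y = 0, where A(z,w) = x^{2n−1} a^{2n−1}|z−w|^{2n} + x^{2n−1}(x−a)^{2n−1}|w|^{2n} − a^{2n−1}(x−a)^{2n−1}|z|^{2n}. -/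
lemma keypos14 (j : ℕ) (a x : ℝ) (ha : a ≠ 0) :
    0 < a^(2*j+1) * (x^(2*j+1) - (x-a)^(2*j+1)) := by
  have hodd : Odd (2*j+1) := ⟨j, by ring⟩
  rcases ha.lt_or_gt with h | h
  · have h1 : x ^ (2*j+1) < (x-a)^(2*j+1) := hodd.strictMono_pow (by linarith)
    have h2 : a ^ (2*j+1) < 0 := hodd.pow_neg h
    nlinarith
  · have h1 : (x-a) ^ (2*j+1) < x^(2*j+1) := hodd.strictMono_pow (by linarith)
    have h2 : (0:ℝ) < a ^ (2*j+1) := pow_pos h _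
    nlinarith

open Finset in
lemma ident14 (m : ℕ) (x y a : ℝ) :
    x ^ (2*m+1) * a ^ (2*m+1) * ((x - a) ^ 2 + (y - 0) ^ 2) ^ (m+1)
        + x ^ (2*m+1) * (x - a) ^ (2*m+1) * (a ^ 2 + (0 : ℝ) ^ 2) ^ (m+1)
        - a ^ (2*m+1) * (x - a) ^ (2*m+1) * (x ^ 2 + y ^ 2) ^ (m+1)
      = ∑ j ∈ Finset.range (m+1), ((m+1).choose (j+1) : ℝ) * x ^ (2 * (m - j)) * a ^ (2 * (m - j))
          * (x - a) ^ (2 * (m - j)) * a ^ (2*j+1) * y ^ (2*j+2)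
          * (x ^ (2*j+1) - (x - a) ^ (2*j+1)) := by
  have e1 : ((x - a) ^ 2 + (y - 0) ^ 2) ^ (m+1)
      = ∑ k ∈ range (m+2), (y^2)^k * ((x-a)^2)^(m+1-k) * ((m+1).choose k : ℝ) := by
    rw [show (x-a)^2+(y-0)^2 = y^2 + (x-a)^2 by ring, add_pow]
  have e2 : (x ^ 2 + y ^ 2) ^ (m+1)
      = ∑ k ∈ range (m+2), (y^2)^k * (x^2)^(m+1-k) * ((m+1).choose k : ℝ) := by
    rw [show x^2+y^2 = y^2 + x^2 by ring, add_pow]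
  rw [e1, e2, Finset.mul_sum, Finset.mul_sum]
  rw [sub_eq_iff_eq_add]
  rw [show (∑ k ∈ range (m+2),
        x ^ (2*m+1) * a ^ (2*m+1) * ((y^2)^k * ((x-a)^2)^(m+1-k) * ((m+1).choose k : ℝ)))
      + x ^ (2*m+1) * (x - a) ^ (2*m+1) * (a ^ 2 + (0:ℝ) ^ 2) ^ (m+1)
      = (∑ k ∈ range (m+2),
          (x ^ (2*m+1) * a ^ (2*m+1) * ((y^2)^k * ((x-a)^2)^(m+1-k) * ((m+1).choose k : ℝ))
           - a ^ (2*m+1) * (x - a) ^ (2*m+1) * ((y^2)^k * (x^2)^(m+1-k) * ((m+1).choose k : ℝ))))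
        + x ^ (2*m+1) * (x - a) ^ (2*m+1) * (a ^ 2 + (0:ℝ) ^ 2) ^ (m+1)
        + ∑ k ∈ range (m+2),
            a ^ (2*m+1) * (x - a) ^ (2*m+1) * ((y^2)^k * (x^2)^(m+1-k) * ((m+1).choose k : ℝ)) by
      rw [Finset.sum_sub_distrib]; ring]
  congr 1
  rw [Finset.sum_range_succ']
  have h0 : x ^ (2*m+1) * a ^ (2*m+1) * ((y^2)^0 * ((x-a)^2)^(m+1-0) * ((m+1).choose 0 : ℝ))
      - a ^ (2*m+1) * (x - a) ^ (2*m+1) * ((y^2)^0 * (x^2)^(m+1-0) * ((m+1).choose 0 : ℝ))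
      + x ^ (2*m+1) * (x - a) ^ (2*m+1) * (a ^ 2 + (0:ℝ) ^ 2) ^ (m+1) = 0 := by
    simp only [pow_zero, Nat.choose_zero_right, Nat.cast_one, mul_one, one_mul, Nat.sub_zero]
    rw [show (a^2 + (0:ℝ)^2) = a^2 by ring]
    rw [show m+1 = m+1 by rfl]
    rw [pow_succ ((x-a)^2) m, pow_succ ((x:ℝ)^2) m, pow_succ ((a:ℝ)^2) m]
    rw [show (2*m+1) = 2*m+1 from rfl, pow_succ x (2*m), pow_succ a (2*m), pow_succ (x-a) (2*m),
      ← pow_mul, ← pow_mul, ← pow_mul]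
    ring
  rw [add_assoc, h0, add_zero]
  refine Finset.sum_congr rfl fun j hj => ?_
  have hjm : j ≤ m := by simpa using Nat.lt_succ_iff.mp (Finset.mem_range.mp hj)
  have h1 : m + 1 - (j+1) = m - j := by omega
  rw [h1]
  rw [show 2*m+1 = 2*(m-j) + (2*j+1) by omega]
  rw [pow_add x, pow_add a, pow_add (x-a), ← pow_mul, ← pow_mul, ← pow_mul,
    show 2*(j+1) = 2*j+2 from by ring]
  ring

open Finset in
/-- for `b = 0` (and `z = (x,y) ≠ 0`, `w = (a,0) ≠ 0` distinct),
`A(z,w)` equals the displayed binomial sum, is nonnegative, and vanishes iff `y = 0`. -/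
theorem stmt_14 (n : ℕ) (hn : 1 ≤ n) (x y a : ℝ)
    (hz : (x, y) ≠ ((0, 0) : ℝ × ℝ)) (hw : (a, (0 : ℝ)) ≠ ((0, 0) : ℝ × ℝ))
    (hzw : (x, y) ≠ ((a, (0 : ℝ)) : ℝ × ℝ)) :
    (x ^ (2 * n - 1) * a ^ (2 * n - 1) * ((x - a) ^ 2 + (y - 0) ^ 2) ^ n
        + x ^ (2 * n - 1) * (x - a) ^ (2 * n - 1) * (a ^ 2 + (0 : ℝ) ^ 2) ^ n
        - a ^ (2 * n - 1) * (x - a) ^ (2 * n - 1) * (x ^ 2 + y ^ 2) ^ n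
      = ∑ k ∈ Finset.Icc 1 n, (n.choose k : ℝ) * x ^ (2 * (n - k)) * a ^ (2 * (n - k))
          * (x - a) ^ (2 * (n - k)) * a ^ (2 * k - 1) * y ^ (2 * k)
          * (x ^ (2 * k - 1) - (x - a) ^ (2 * k - 1))) ∧
    0 ≤ x ^ (2 * n - 1) * a ^ (2 * n - 1) * ((x - a) ^ 2 + (y - 0) ^ 2) ^ n
        + x ^ (2 * n - 1) * (x - a) ^ (2 * n - 1) * (a ^ 2 + (0 : ℝ) ^ 2) ^ n
        - a ^ (2 * n - 1) * (x - a) ^ (2 * n - 1) * (x ^ 2 + y ^ 2) ^ n ∧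
    (x ^ (2 * n - 1) * a ^ (2 * n - 1) * ((x - a) ^ 2 + (y - 0) ^ 2) ^ n
        + x ^ (2 * n - 1) * (x - a) ^ (2 * n - 1) * (a ^ 2 + (0 : ℝ) ^ 2) ^ n
        - a ^ (2 * n - 1) * (x - a) ^ (2 * n - 1) * (x ^ 2 + y ^ 2) ^ n = 0
      ↔ y = 0) := by
  have ha : a ≠ 0 := by
    intro h; exact hw (by simp [h])
  obtain ⟨m, rfl⟩ : ∃ m, n = m + 1 := ⟨n - 1, by omega⟩
  simp only [show 2*(m+1)-1 = 2*m+1 from by omega]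
  have hA := ident14 m x y a
  set T : ℕ → ℝ := fun j => ((m+1).choose (j+1) : ℝ) * x ^ (2 * (m - j)) * a ^ (2 * (m - j))
      * (x - a) ^ (2 * (m - j)) * a ^ (2*j+1) * y ^ (2*j+2)
      * (x ^ (2*j+1) - (x - a) ^ (2*j+1)) with hT
  have hIcc : (∑ k ∈ Finset.Icc 1 (m+1), ((m+1).choose k : ℝ) * x ^ (2 * ((m+1) - k))
        * a ^ (2 * ((m+1) - k)) * (x - a) ^ (2 * ((m+1) - k)) * a ^ (2 * k - 1) * y ^ (2 * k)
        * (x ^ (2 * k - 1) - (x - a) ^ (2 * k - 1))) = ∑ j ∈ Finset.range (m+1), T j := by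
    rw [← Finset.Ico_add_one_right_eq_Icc, Finset.sum_Ico_eq_sum_range]
    refine Finset.sum_congr (by norm_num) fun j hj => ?_
    rw [hT]
    simp only
    rw [show (m+1) - (1+j) = m - j from by omega, show 2*(1+j)-1 = 2*j+1 from by omega,
      show 2*(1+j) = 2*j+2 from by omega, show 1+j = j+1 from by omega]
  have hnonneg : ∀ j ∈ Finset.range (m+1), 0 ≤ T j := by
    intro j _
    have hkey := (keypos14 j a x ha).le
    have hx : 0 ≤ x ^ (2*(m-j)) := Even.pow_nonneg ⟨m-j, by ring⟩ x
    have hax : 0 ≤ a ^ (2*(m-j)) := Even.pow_nonneg ⟨m-j, by ring⟩ a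
    have hxa : 0 ≤ (x-a) ^ (2*(m-j)) := Even.pow_nonneg ⟨m-j, by ring⟩ (x-a)
    have hy2 : 0 ≤ y ^ (2*j+2) := Even.pow_nonneg ⟨j+1, by ring⟩ y
    have hc : (0:ℝ) ≤ ((m+1).choose (j+1) : ℝ) := Nat.cast_nonneg _
    rw [hT]
    simp only
    nlinarith [mul_nonneg (mul_nonneg (mul_nonneg (mul_nonneg hc hx) hax) hxa) hy2]
  have hTm : y ≠ 0 → 0 < T m := by
    intro hy
    have hkey := keypos14 m a x ha
    have hy2 : 0 < y ^ (2*m+2) :=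
      lt_of_le_of_ne (Even.pow_nonneg ⟨m+1, by ring⟩ y) (Ne.symm (pow_ne_zero _ hy))
    rw [hT]
    simp only [Nat.sub_self, Nat.mul_zero, pow_zero, Nat.choose_self, Nat.cast_one,
      one_mul, mul_one]
    nlinarith [mul_pos hkey hy2]
  refine ⟨by rw [hIcc]; exact hA, ?_, ?_⟩
  · rw [hA]; exact Finset.sum_nonneg hnonneg
  · constructor
    · intro h
      by_contra hy
      have hpos : 0 < ∑ j ∈ Finset.range (m+1), T j :=
        Finset.sum_pos' hnonneg ⟨m, Finset.self_mem_range_succ m, hTm hy⟩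
      rw [hA] at h; linarith
    · intro hy
      rw [hA]
      refine Finset.sum_eq_zero fun j _ => ?_
      rw [hy, zero_pow (by omega : 2*j+2 ≠ 0)]; ring
end

section
/- Let z = (x,y), w = (a,b) ∈ ℝ² be nonzero with w ∉ span(z), and suppose x = 0 (z lies on the vertical axis). Then for every n ≥ 1, p_n(0,z,w) = −a^{2n−1}(−a)^{2n−1}|z|^{2n} / (|z|^{2n}|w|^{2n}|z−w|^{2n}) = a^{2(2n−1)} / (|w|^{2n}|z−w|^{2n}) > 0, where p_n is the permutation sum of the kernel K_n(u,v) = u^{2n−1}/(u²+v²)^n. -/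
/-- if `z = (0,y)` lies on the vertical axis, `z, w ≠ 0` and
`w ∉ span(z)`, then `p_n(0,z,w)` equals the two displayed expressions and is positive. -/
theorem stmt_17 (n : ℕ) (hn : 1 ≤ n) (z w : ℝ × ℝ) (hz : z ≠ 0) (hw : w ≠ 0)
    (hx : z.1 = 0) (hspan : w ∉ Submodule.span ℝ ({z} : Set (ℝ × ℝ))) :
    pperm n 0 z w
        = -(w.1 ^ (2 * n - 1) * (-w.1) ^ (2 * n - 1) * (z.1 ^ 2 + z.2 ^ 2) ^ n)
            / ((z.1 ^ 2 + z.2 ^ 2) ^ n * (w.1 ^ 2 + w.2 ^ 2) ^ n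
                * ((z.1 - w.1) ^ 2 + (z.2 - w.2) ^ 2) ^ n) ∧
    pperm n 0 z w
        = w.1 ^ (2 * (2 * n - 1))
            / ((w.1 ^ 2 + w.2 ^ 2) ^ n * ((z.1 - w.1) ^ 2 + (z.2 - w.2) ^ 2) ^ n) ∧
    0 < pperm n 0 z w := by
  obtain ⟨m, rfl⟩ : ∃ m, n = m + 1 := ⟨n - 1, by omega⟩
  have hy : z.2 ≠ 0 := by
    intro h
    exact hz (Prod.ext hx h)
  have ha : w.1 ≠ 0 := by
    intro h
    apply hspan
    rw [Submodule.mem_span_singleton]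
    refine ⟨w.2 / z.2, Prod.ext ?_ ?_⟩
    · simp [hx, h]
    · simp; field_simp
  have hk : 2 * (m + 1) - 1 = 2 * m + 1 := by omega
  have hB : (0:ℝ) < w.1 ^ 2 + w.2 ^ 2 := by positivity
  have hC : (0:ℝ) < (z.1 - w.1) ^ 2 + (z.2 - w.2) ^ 2 := by
    have h1 : (z.1 - w.1) ^ 2 > 0 := by
      have : z.1 - w.1 ≠ 0 := by rw [hx]; simpa using ha
      positivity
    positivity
  have hA : (0:ℝ) < z.1 ^ 2 + z.2 ^ 2 := by positivity
  have hp : pperm (m + 1) 0 z w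
      = w.1 ^ (2 * m + 1) * w.1 ^ (2 * m + 1)
        / ((w.1 ^ 2 + w.2 ^ 2) ^ (m + 1) * ((z.1 - w.1) ^ 2 + (z.2 - w.2) ^ 2) ^ (m + 1)) := by
    simp only [pperm, Kker, Prod.fst_sub, Prod.snd_sub, Prod.fst_zero, Prod.snd_zero, hx, hk,
      zero_sub, sub_zero, Prod.fst_neg, Prod.snd_neg, neg_zero, neg_neg]
    rw [zero_pow (by omega), zero_pow (by omega), zero_div, zero_div, zero_mul, zero_mul,
      zero_add, zero_add]
    have h1 : (-w.1) ^ 2 + (z.2 - w.2) ^ 2 = w.1 ^ 2 + (w.2 - z.2) ^ 2 := by ring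
    rw [h1, div_mul_div_comm]
  refine ⟨?_, ?_, ?_⟩
  · rw [hp, hx, hk]
    have h3 : (-w.1) ^ (2 * m + 1) = -(w.1 ^ (2 * m + 1)) := Odd.neg_pow ⟨m, by ring⟩ _
    rw [h3, hx] at *
    field_simp
  · rw [hp, hk]
    congr 1
    rw [← pow_add]
    congr 1
    omega
  · rw [hp]
    have : (0:ℝ) < w.1 ^ (2 * m + 1) * w.1 ^ (2 * m + 1) := by
      rw [← pow_add]
      have h4 : 0 < w.1 ^ (2 * (2 * m + 1)) := Even.pow_pos ⟨2*m+1, by ring⟩ ha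
      convert h4 using 2; omega
    positivity
end
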